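/- Suppose Ω ⊂ P(ℝ^{d+1}) is a proper domain and p_n, q_n ∈ Ω are sequences with p_n → x ∈ ∂Ω, q_n → y ∈ ∂Ω, and limsup C_Ω(p_n, q_n) < ∞. Then y ∈ ker f for every f ∈ Ω* with f(x) = 0. -/

import Mathlib

open Projectivization Filter Topology

/-- Real projective space `P(ℝ^{d+1})`. -/
abbrev PV (d : ℕ) := Projectivization ℝ (Fin (d+1) → ℝ)

/-- The quotient topology on real projective space. -/
instance (d : ℕ) : TopologicalSpace (PV d) :=
  inferInstanceAs (TopologicalSpace (Quotient (projectivizationSetoid ℝ (Fin (d+1) → ℝ))))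

/-- The dual set `Ω*`: (classes of) nonzero linear functionals whose kernel misses `Ω`. -/
def dualSet {d : ℕ} (Ω : Set (PV d)) : Set (Module.Dual ℝ (Fin (d+1) → ℝ)) :=
  {f | f ≠ 0 ∧ ∀ p ∈ Ω, f p.rep ≠ 0}

/-- `log |f(p)g(q)/(f(q)g(p))|`, computed using representatives (it is independent of
the choice of representatives of `p`, `q`, `f`, `g`). -/
noncomputable def logRatio {d : ℕ} (f g : Module.Dual ℝ (Fin (d+1) → ℝ)) (p q : PV d) : ℝ :=
  Real.log (|f p.rep * g q.rep| / |f q.rep * g p.rep|)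

/-- The Hilbert-type cross-ratio function `C_Ω(p,q) = sup_{f,g ∈ Ω*} log|f(p)g(q)/(f(q)g(p))|`. -/
noncomputable def CC {d : ℕ} (Ω : Set (PV d)) (p q : PV d) : ℝ :=
  sSup {t | ∃ f ∈ dualSet Ω, ∃ g ∈ dualSet Ω, t = logRatio f g p q}

/-- A proper domain: open, connected, and bounded in some affine chart (equivalently,
its closure misses some projective hyperplane). -/
def IsProperDomain {d : ℕ} (Ω : Set (PV d)) : Prop :=
  IsOpen Ω ∧ IsConnected Ω ∧
    ∃ f : Module.Dual ℝ (Fin (d+1) → ℝ), f ≠ 0 ∧ ∀ p ∈ closure Ω, f p.rep ≠ 0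

/-! If `f(x) = 0 ≠ f(y)`, take the functional `g` of the definition of a proper domain, which
vanishes nowhere on `closure Ω`. After normalising by `‖v‖`, which makes `|f v| / ‖v‖` a
continuous function on projective space, the ratio `|g(pₙ) f(qₙ)| / |g(qₙ) f(pₙ)|` has a positive
numerator limit and a denominator tending to `0⁺`, so its logarithm tends to `+∞`.

It is bounded by `C_Ω(pₙ, qₙ)` only because that supremum is finite (otherwise `sSup` is `0`): a
small ball around a representative of `b ∈ Ω` lies in the cone over `Ω`, and a functional that
vanishes nowhere on that ball satisfies `|f v| ≤ K |f b|` with `K` depending only on `v`, `b`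
and the radius. -/

theorem abs_apply_lt_of_forall_apply_add_smul_ne_zero {V : Type*} [AddCommGroup V]
    [Module ℝ V] (f : Module.Dual ℝ V) {v w : V}
    (h : ∀ s : ℝ, |s| ≤ 1 → f (v + s • w) ≠ 0) : |f w| < |f v| := by
  have hv : f v ≠ 0 := by simpa using h 0 (by simp)
  by_contra! hle
  have hw : f w ≠ 0 := abs_pos.mp ((abs_pos.mpr hv).trans_le hle)
  refine h (-(f v / f w)) ?_ ?_
  · rw [abs_neg, abs_div]
    exact div_le_one_of_le₀ hle (abs_nonneg _)
  · rw [map_add, map_smul, smul_eq_mul]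
    field_simp
    ring

section ProjectiveSpace

variable {d : ℕ}

theorem apply_ne_zero_of_mem_dualSet {Ω : Set (PV d)} {f : Module.Dual ℝ (Fin (d+1) → ℝ)}
    (hf : f ∈ dualSet Ω) {v : Fin (d+1) → ℝ} (hv : v ≠ 0) (hvΩ : mk ℝ v hv ∈ Ω) :
    f v ≠ 0 := by
  obtain ⟨a, ha⟩ := exists_smul_eq_mk_rep ℝ v hv
  have := hf.2 _ hvΩ
  rw [← ha, Units.smul_def, map_smul, smul_eq_mul] at this
  exact right_ne_zero_of_mul this

theorem eventually_nhds_mk_mem {Ω : Set (PV d)} (hΩ : IsOpen Ω) {v : Fin (d+1) → ℝ}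
    (hv : v ≠ 0) (hvΩ : mk ℝ v hv ∈ Ω) :
    ∀ᶠ w in 𝓝 v, ∃ hw : w ≠ 0, mk ℝ w hw ∈ Ω := by
  have hmk : Continuous (mk' ℝ : {w : Fin (d+1) → ℝ // w ≠ 0} → PV d) :=
    continuous_quotient_mk'
  have hopen := isOpen_compl_singleton.isOpenMap_subtype_val _ (hΩ.preimage hmk)
  filter_upwards [hopen.mem_nhds ⟨⟨v, hv⟩, hvΩ, rfl⟩]
  rintro _ ⟨⟨w, hw⟩, hwΩ, rfl⟩
  exact ⟨hw, hwΩ⟩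

theorem exists_abs_apply_le_mul_abs_apply_rep {Ω : Set (PV d)} (hΩ : IsOpen Ω) {b : PV d}
    (hb : b ∈ Ω) (v : Fin (d+1) → ℝ) :
    ∃ K : ℝ, ∀ f ∈ dualSet Ω, |f v| ≤ K * |f b.rep| := by
  have hline : Tendsto (fun s : ℝ => b.rep + s • v) (𝓝 0) (𝓝 b.rep) :=
    (continuous_const.add (continuous_id.smul continuous_const)).tendsto' 0 b.rep (by simp)
  obtain ⟨ε, hε, hball⟩ := Metric.eventually_nhds_iff.mp
    (hline.eventually (eventually_nhds_mk_mem hΩ b.rep_nonzero (by rwa [mk_rep])))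
  refine ⟨2 / ε, fun f hf => ?_⟩
  have hlt : |f ((ε / 2) • v)| < |f b.rep| := by
    refine abs_apply_lt_of_forall_apply_add_smul_ne_zero f fun s hs => ?_
    obtain ⟨hw, hwΩ⟩ := hball (y := s * (ε / 2)) (by
      rw [Real.dist_0_eq_abs, abs_mul, abs_of_pos (half_pos hε)]
      nlinarith [abs_nonneg s])
    rw [smul_smul]
    exact apply_ne_zero_of_mem_dualSet hf hw hwΩ
  rw [map_smul, smul_eq_mul, abs_mul, abs_of_pos (half_pos hε)] at hlt
  rw [div_mul_eq_mul_div, le_div_iff₀ hε]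
  linarith

theorem bddAbove_logRatio {Ω : Set (PV d)} (hΩ : IsOpen Ω) {a b : PV d} (ha : a ∈ Ω)
    (hb : b ∈ Ω) :
    BddAbove {t | ∃ f ∈ dualSet Ω, ∃ g ∈ dualSet Ω, t = logRatio f g a b} := by
  obtain ⟨K, hK⟩ := exists_abs_apply_le_mul_abs_apply_rep hΩ hb a.rep
  obtain ⟨L, hL⟩ := exists_abs_apply_le_mul_abs_apply_rep hΩ ha b.rep
  refine ⟨Real.log (K * L), ?_⟩
  rintro t ⟨f, hf, g, hg, rfl⟩
  have hden : 0 < |f b.rep * g a.rep| := abs_pos.mpr (mul_ne_zero (hf.2 b hb) (hg.2 a ha))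
  have hnum : 0 < |f a.rep * g b.rep| := abs_pos.mpr (mul_ne_zero (hf.2 a ha) (hg.2 b hb))
  refine Real.log_le_log (div_pos hnum hden) ?_
  rw [div_le_iff₀ hden, abs_mul, abs_mul]
  calc |f a.rep| * |g b.rep| ≤ (K * |f b.rep|) * (L * |g a.rep|) :=
        mul_le_mul (hK f hf) (hL g hg) (abs_nonneg _) ((abs_nonneg _).trans (hK f hf))
    _ = K * L * (|f b.rep| * |g a.rep|) := by ring

theorem logRatio_le_CC {Ω : Set (PV d)} (hΩ : IsOpen Ω) {a b : PV d} (ha : a ∈ Ω)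
    (hb : b ∈ Ω) {f g : Module.Dual ℝ (Fin (d+1) → ℝ)} (hf : f ∈ dualSet Ω)
    (hg : g ∈ dualSet Ω) : logRatio f g a b ≤ CC Ω a b :=
  le_csSup (bddAbove_logRatio hΩ ha hb) ⟨f, hf, g, hg, rfl⟩

noncomputable def normRatio (f : Module.Dual ℝ (Fin (d+1) → ℝ)) : PV d → ℝ :=
  Projectivization.lift (fun v => |f v.1| / ‖v.1‖) (by
    rintro ⟨a, ha⟩ ⟨b, hb⟩ t (rfl : a = t • b)
    have ht : t ≠ 0 := by rintro rfl; simp at ha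
    simp only [map_smul, norm_smul, smul_eq_mul, abs_mul, Real.norm_eq_abs]
    rw [mul_div_mul_left _ _ (abs_ne_zero.2 ht)])

theorem normRatio_apply (f : Module.Dual ℝ (Fin (d+1) → ℝ)) (x : PV d) :
    normRatio f x = |f x.rep| / ‖x.rep‖ := by
  conv_lhs => rw [← mk_rep x]
  rfl

theorem normRatio_pos {f : Module.Dual ℝ (Fin (d+1) → ℝ)} {x : PV d} (hx : f x.rep ≠ 0) :
    0 < normRatio f x := by
  rw [normRatio_apply]
  exact div_pos (abs_pos.mpr hx) (norm_pos_iff.mpr x.rep_nonzero)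

theorem continuous_normRatio (f : Module.Dual ℝ (Fin (d+1) → ℝ)) :
    Continuous (normRatio (d := d) f) :=
  Continuous.quotient_lift
    ((f.continuous_of_finiteDimensional.comp continuous_subtype_val).abs.div
      (continuous_norm.comp continuous_subtype_val) fun v => norm_ne_zero_iff.2 v.2) _

theorem logRatio_eq_log_normRatio (f g : Module.Dual ℝ (Fin (d+1) → ℝ)) (p q : PV d) :
    logRatio f g p q =
      Real.log (normRatio f p * normRatio g q / (normRatio f q * normRatio g p)) := by
  have hp : ‖p.rep‖ ≠ 0 := norm_ne_zero_iff.mpr p.rep_nonzero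
  have hq : ‖q.rep‖ ≠ 0 := norm_ne_zero_iff.mpr q.rep_nonzero
  simp only [logRatio, normRatio_apply, abs_mul]
  rw [div_mul_div_comm, div_mul_div_comm, mul_comm ‖q.rep‖,
    div_div_div_cancel_right₀ (mul_ne_zero hp hq)]

theorem tendsto_logRatio_atTop {f g : Module.Dual ℝ (Fin (d+1) → ℝ)} {p q : ℕ → PV d}
    {x y : PV d} (hpx : Tendsto p atTop (𝓝 x)) (hqy : Tendsto q atTop (𝓝 y))
    (hfx : f x.rep = 0) (hfy : f y.rep ≠ 0) (hgx : g x.rep ≠ 0) (hgy : g y.rep ≠ 0)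
    (hfp : ∀ n, f (p n).rep ≠ 0) :
    Tendsto (fun n => logRatio g f (p n) (q n)) atTop atTop := by
  have hlim {h : Module.Dual ℝ (Fin (d+1) → ℝ)} {r : ℕ → PV d} {z : PV d}
      (hrz : Tendsto r atTop (𝓝 z)) : Tendsto (fun n => normRatio h (r n)) atTop
        (𝓝 (normRatio h z)) :=
    ((continuous_normRatio h).tendsto z).comp hrz
  have hnum := (hlim (h := g) hpx).mul (hlim (h := f) hqy)
  have hden := (hlim (h := g) hqy).mul (hlim (h := f) hpx)
  rw [normRatio_apply f x, hfx, abs_zero, zero_div, mul_zero] at hden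
  have hden_pos : ∀ᶠ n in atTop, 0 < normRatio g (q n) * normRatio f (p n) :=
    (hlim hqy).eventually (lt_mem_nhds (normRatio_pos hgy)) |>.mono fun n hn =>
      mul_pos hn (normRatio_pos (hfp n))
  have hratio := hnum.pos_mul_atTop (mul_pos (normRatio_pos hgx) (normRatio_pos hfy))
    (tendsto_nhdsWithin_iff.mpr ⟨hden, hden_pos⟩).inv_tendsto_nhdsGT_zero
  simpa only [logRatio_eq_log_normRatio, div_eq_mul_inv, Function.comp_def, Pi.inv_apply] using
    Real.tendsto_log_atTop.comp hratio

end ProjectiveSpace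

theorem boundary_behavior_general {d : ℕ} (Ω : Set (PV d)) (hΩ : IsProperDomain Ω)
    (p q : ℕ → PV d) (hp : ∀ n, p n ∈ Ω) (hq : ∀ n, q n ∈ Ω)
    (x y : PV d)
    (hpx : Tendsto p atTop (nhds x)) (hqy : Tendsto q atTop (nhds y))
    (M : ℝ) (hM : ∀ᶠ n in atTop, CC Ω (p n) (q n) ≤ M) :
    ∀ f ∈ dualSet Ω, f x.rep = 0 → f y.rep = 0 := by
  obtain ⟨hopen, -, g, hg0, hgcl⟩ := hΩ
  intro f hf hfx
  by_contra hfy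
  have hg : g ∈ dualSet Ω := ⟨hg0, fun r hr => hgcl r (subset_closure hr)⟩
  have hgx := hgcl x (mem_closure_of_tendsto hpx (.of_forall hp))
  have hgy := hgcl y (mem_closure_of_tendsto hqy (.of_forall hq))
  have hlog := tendsto_logRatio_atTop hpx hqy hfx hfy hgx hgy fun n => hf.2 _ (hp n)
  obtain ⟨n, hn, hCC⟩ := ((hlog.eventually_gt_atTop M).and hM).exists
  exact (hn.trans_le (logRatio_le_CC hopen (hp n) (hq n) hg hf)).not_ge hCC

/-- if `Ω` is a proper domain, `p_n → x ∈ ∂Ω`, `q_n → y ∈ ∂Ω`, and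
`C_Ω(p_n,q_n)` is eventually bounded (i.e. `limsup C_Ω(p_n,q_n) < ∞`), then `y ∈ ker f`
for every `f ∈ Ω*` with `f(x) = 0`. -/
theorem boundary_behavior {d : ℕ} (Ω : Set (PV d)) (hΩ : IsProperDomain Ω)
    (p q : ℕ → PV d) (hp : ∀ n, p n ∈ Ω) (hq : ∀ n, q n ∈ Ω)
    (x y : PV d) (hx : x ∈ frontier Ω) (hy : y ∈ frontier Ω)
    (hpx : Tendsto p atTop (nhds x)) (hqy : Tendsto q atTop (nhds y))
    (M : ℝ) (hM : ∀ᶠ n in atTop, CC Ω (p n) (q n) ≤ M) :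
    ∀ f ∈ dualSet Ω, f x.rep = 0 → f y.rep = 0 :=
  boundary_behavior_general Ω hΩ p q hp hq x y hpx hqy M hM
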